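/- arXiv:1903.09853 — 2 statements merged into one kernel-verified Lean document; each statement's English description precedes it below -/
import Mathlib

section
/- For every real number q ≥ 1, every natural number k, and every real number a ≥ k, one has ∏_{i=0}^{k} (a - i) ≤ (a - k + k/q) · ∏_{i=0}^{k-1} (a - i - 1/q). -/
open Finset

-- The right side exceeds the left by exactly `(k + 1) t (1 - t)`.
lemma add_mul_mul_sub_one_le (b k t : ℝ) (hk : 0 ≤ k) (ht₀ : 0 ≤ t) (ht₁ : t ≤ 1) :
    (b + k * t) * (b - 1) ≤ (b - 1 + (k + 1) * t) * (b - t) := by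
  nlinarith [mul_nonneg (mul_nonneg (by linarith : 0 ≤ k + 1) ht₀) (sub_nonneg.2 ht₁)]

lemma prod_range_succ_sub_le (t : ℝ) (ht₀ : 0 ≤ t) (ht₁ : t ≤ 1) (k : ℕ) (a : ℝ)
    (ha : (k : ℝ) ≤ a) :
    ∏ i ∈ range (k + 1), (a - i) ≤ (a - k + k * t) * ∏ i ∈ range k, (a - i - t) := by
  induction k with
  | zero => simp
  | succ k ih =>
    rw [prod_range_succ (fun i : ℕ => a - i) (k + 1),
      prod_range_succ (fun i : ℕ => a - i - t) k]
    push_cast at ha ⊢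
    have hP : 0 ≤ ∏ i ∈ range k, (a - i - t) := prod_nonneg fun i hi => by
      have : (i : ℝ) + 1 ≤ k := by exact_mod_cast mem_range.1 hi
      linarith
    have hstep := add_mul_mul_sub_one_le (a - k) k t k.cast_nonneg ht₀ ht₁
    calc (∏ i ∈ range (k + 1), (a - i)) * (a - (k + 1))
        ≤ (a - k + k * t) * (∏ i ∈ range k, (a - i - t)) * (a - (k + 1)) :=
          mul_le_mul_of_nonneg_right (ih (by linarith)) (by linarith)
      _ = ((a - k + k * t) * (a - k - 1)) * ∏ i ∈ range k, (a - i - t) := by ring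
      _ ≤ ((a - k - 1 + (k + 1) * t) * (a - k - t)) * ∏ i ∈ range k, (a - i - t) :=
          mul_le_mul_of_nonneg_right hstep hP
      _ = (a - (k + 1) + (k + 1) * t) * ((∏ i ∈ range k, (a - i - t)) * (a - k - t)) := by
          ring

theorem prod_ineq (q : ℝ) (hq : 1 ≤ q) (k : ℕ) (a : ℝ) (ha : (k : ℝ) ≤ a) :
    ∏ i ∈ Finset.range (k + 1), (a - i) ≤
      (a - k + k / q) * ∏ i ∈ Finset.range k, (a - i - 1 / q) := by
  have hq₀ : 0 < q := one_pos.trans_le hq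
  rw [div_eq_mul_one_div]
  exact prod_range_succ_sub_le (1 / q) (by positivity) ((div_le_one hq₀).2 hq) k a ha
end

section
/- For any prime p, integer m ≥ 1, and integer n with n ≥ p·(δ_p + m - 1), one has C_m^p(n) ≤ C_m^p(n-1) + C_{m-1}^p(n-1). -/
/-!
With `a i = n - (δ + i) p`, multiplying by `m!` turns the claim into
`∏_{i < m} a i ≤ ∏_{i < m} (a i - 1) + m ∏_{i < m - 1} (a i - 1)`. As `p ≥ 1`, consecutive `a i`
drop by at least `1`, and the inequality follows by induction on `m`: the new factor
`a m ≤ a (m - 1) - 1` absorbs the error term of the previous step.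
-/

open Finset

theorem prod_range_succ_le_prod_sub_one_add {R : Type*} [CommRing R] [LinearOrder R]
    [IsStrictOrderedRing R] (a : ℕ → R) (ha : ∀ i, a (i + 1) + 1 ≤ a i) (m : ℕ) (hm : 0 ≤ a m) :
    ∏ i ∈ range (m + 1), a i
      ≤ ∏ i ∈ range (m + 1), (a i - 1) + (m + 1) * ∏ i ∈ range m, (a i - 1) := by
  induction m with
  | zero => simp
  | succ m ih =>
    set A := ∏ i ∈ range (m + 1), a i
    set B := ∏ i ∈ range (m + 1), (a i - 1)
    set Q := ∏ i ∈ range m, (a i - 1)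
    have hB : B = Q * (a m - 1) := prod_range_succ _ m
    have hQ : 0 ≤ Q := by
      have hanti : Antitone a := antitone_nat_of_succ_le fun i => by linarith [ha i]
      refine prod_nonneg fun i hi => ?_
      linarith [hanti (Nat.succ_le_of_lt (mem_range.mp hi)), ha i, ha m]
    have IH : A - B ≤ (m + 1) * Q := by linarith [ih (by linarith [ha m])]
    rw [prod_range_succ, prod_range_succ (fun i => a i - 1)]
    push_cast
    calc A * a (m + 1) = (A - B) * a (m + 1) + B * (a (m + 1) - 1) + B := by ring
      _ ≤ (m + 1) * Q * a (m + 1) + B * (a (m + 1) - 1) + B := by gcongr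
      _ ≤ (m + 1) * Q * (a m - 1) + B * (a (m + 1) - 1) + B := by gcongr; linarith [ha m]
      _ = B * (a (m + 1) - 1) + (m + 1 + 1) * B := by rw [hB]; ring

theorem C_ineq_general (p : ℕ) (hp : p.Prime) (m : ℕ) (n : ℤ)
    (δ : ℚ) (hδ : δ = if p = 2 then 1 else 0)
    (hn : ((p : ℚ)) * (δ + m - 1) ≤ (n : ℚ))
    (C : ℕ → ℤ → ℚ)
    (hC : ∀ k : ℕ, ∀ N : ℤ,
      C k N = (1 / (k.factorial : ℚ)) * ∏ i ∈ Finset.range k, ((N : ℚ) - (δ + i) * p)) :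
    C m n ≤ C m (n - 1) + C (m - 1) (n - 1) := by
  cases m with
  | zero => simp [hC]
  | succ m =>
    have hp1 : (1 : ℚ) ≤ p := by exact_mod_cast hp.one_lt.le
    have hδ0 : 0 ≤ δ := by rw [hδ]; split_ifs <;> norm_num
    have key := prod_range_succ_le_prod_sub_one_add (fun i => (n : ℚ) - (δ + i) * p)
      (fun i => by push_cast; nlinarith) m (by push_cast at hn; linarith)
    simp only [sub_right_comm _ _ (1 : ℚ)] at key
    simp only [hC, Nat.add_sub_cancel, Int.cast_sub, Int.cast_one, Nat.factorial_succ]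
    push_cast
    calc _ ≤ 1 / ((m + 1) * m.factorial) * (∏ i ∈ range (m + 1), ((n : ℚ) - 1 - (δ + i) * p)
          + (m + 1) * ∏ i ∈ range m, ((n : ℚ) - 1 - (δ + i) * p)) := by gcongr
      _ = _ := by rw [mul_add, ← mul_assoc]; congr 2; field_simp

theorem C_ineq (p : ℕ) (hp : p.Prime) (m : ℕ) (hm : 1 ≤ m) (n : ℤ)
    (δ : ℚ) (hδ : δ = if p = 2 then 1 else 0)
    (hn : ((p : ℚ)) * (δ + m - 1) ≤ (n : ℚ))
    (C : ℕ → ℤ → ℚ)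
    (hC : ∀ k : ℕ, ∀ N : ℤ,
      C k N = (1 / (k.factorial : ℚ)) * ∏ i ∈ Finset.range k, ((N : ℚ) - (δ + i) * p)) :
    C m n ≤ C m (n - 1) + C (m - 1) (n - 1) :=
  C_ineq_general p hp m n δ hδ hn C hC
end
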